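/- arXiv:1911.06435 — 3 statements merged into one kernel-verified Lean document; each statement's English description precedes it below -/
import Mathlib

section
/- Let p ∈ Q^d with all p_i ≥ 0 and ∑ p_i > 1, and suppose V = 1/(∑ p_i - 1) is a positive integer and n = V·p ∈ N^d. Let J be a proper subset of {1,...,d} and s a positive integer such that ∑_{i∈J} p_i − s·∑_{i=1}^d p_i ∈ Z. Then either ∑_{i∈J} n_i ≤ s, or n_i = 0 for all i ∉ J. -/
open Finset

/-- If `∑ n = V + 1` then `∑_J n` exceeds `s` by a multiple of `V`, so once it exceeds `s ≥ 1`
at all it reaches the total `V + 1`, leaving nothing outside `J`. -/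
theorem Finset.sum_le_or_eq_zero_of_sum_modEq {ι : Type*} [Fintype ι] (n : ι → ℕ) {V s : ℕ}
    (hs : 0 < s) (htot : ∑ i, n i = V + 1) (J : Finset ι) (hmod : s ≡ ∑ i ∈ J, n i [MOD V]) :
    ∑ i ∈ J, n i ≤ s ∨ ∀ i ∉ J, n i = 0 := by
  classical
  refine (le_or_gt (∑ i ∈ J, n i) s).imp id fun hlt => ?_
  have hdvd : V ∣ ∑ i ∈ J, n i - s := (Nat.modEq_iff_dvd' hlt.le).mp hmod
  have hV : V ≤ ∑ i ∈ J, n i - s := Nat.le_of_dvd (Nat.sub_pos_of_lt hlt) hdvd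
  have hcompl : ∑ i ∈ Jᶜ, n i = 0 := by
    have := sum_add_sum_compl J n
    omega
  intro i hi
  exact sum_eq_zero_iff.mp hcompl i (mem_compl.mpr hi)

theorem stmt_4_general (d : ℕ) (p : Fin d → ℚ) (hS : 1 < ∑ i, p i)
    (V : ℕ) (hV : (V : ℚ) = ((∑ i, p i) - 1)⁻¹)
    (n : Fin d → ℕ) (hn : ∀ i, (n i : ℚ) = (V : ℚ) * p i)
    (J : Finset (Fin d))
    (s : ℕ) (hs : 0 < s)
    (hint : ∃ z : ℤ, (∑ i ∈ J, p i) - (s : ℚ) * ∑ i, p i = (z : ℚ)) :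
    (∑ i ∈ J, n i) ≤ s ∨ ∀ i ∉ J, n i = 0 := by
  obtain ⟨z, hz⟩ := hint
  have hsum (K : Finset (Fin d)) : ((∑ i ∈ K, n i : ℕ) : ℚ) = V * ∑ i ∈ K, p i := by
    push_cast
    rw [sum_congr rfl fun i _ => hn i, mul_sum]
  have hVS : (V : ℚ) * ∑ i, p i = V + 1 := by
    rw [hV]
    field_simp [sub_ne_zero.mpr hS.ne']
    ring
  have htot : ∑ i, n i = V + 1 := by
    exact_mod_cast (hsum univ).trans hVS
  have hsumJ : ((∑ i ∈ J, n i : ℕ) : ℤ) = s + V * (s + z) := by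
    have : ((∑ i ∈ J, n i : ℕ) : ℚ) = s + V * (s + z) := by
      rw [hsum]
      linear_combination (V : ℚ) * hz + (s : ℚ) * hVS
    exact_mod_cast this
  refine sum_le_or_eq_zero_of_sum_modEq n hs htot J (Int.natCast_modEq_iff.mp ?_)
  exact Int.modEq_iff_dvd.mpr ⟨s + z, by rw [hsumJ]; ring⟩

/-- Lemma 4.6 in rational form. If ∑_{i∈J} p_i − s·∑ p_i ∈ ℤ for a proper
subset J and positive integer s, then either ∑_{i∈J} n_i ≤ s or n_i = 0 for all i ∉ J. -/
theorem stmt_4 (d : ℕ) (p : Fin d → ℚ) (hp : ∀ i, 0 ≤ p i) (hS : 1 < ∑ i, p i)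
    (V : ℕ) (hVpos : 0 < V) (hV : (V : ℚ) = ((∑ i, p i) - 1)⁻¹)
    (n : Fin d → ℕ) (hn : ∀ i, (n i : ℚ) = (V : ℚ) * p i)
    (J : Finset (Fin d)) (hJ : J ≠ Finset.univ)
    (s : ℕ) (hs : 0 < s)
    (hint : ∃ z : ℤ, (∑ i ∈ J, p i) - (s : ℚ) * ∑ i, p i = (z : ℚ)) :
    (∑ i ∈ J, n i) ≤ s ∨ ∀ i ∉ J, n i = 0 :=
  stmt_4_general d p hS V hV n hn J s hs hint
end

section
/- Let p ∈ R^d with p_i ≥ 0 for all i and ∑ p_i > 1; set V = 1/(∑ p_i − 1) and n = V·p. Suppose a ∈ R^d satisfies a·p ≥ 1 and a·e_i ≤ 1 for all i (i.e., a_i ≤ 1). Then for any index i with a_i < 1, n_i ≤ 1/(1 − a_i). -/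
/-! The hyperplane `a · x = 1` weakly separates the standard simplex from `p`, so
`∑ j, (1 - a j) * p j = ∑ j, p j - a · p ≤ ∑ j, p j - 1`. All terms of the left-hand sum are
nonnegative, hence `(1 - a i) * n i = V * (1 - a i) * p i ≤ V * (∑ j, p j - 1) ≤ 1`. -/

theorem one_sub_mul_le_sum_sub_sum_mul {ι : Type*} [Fintype ι] {p a : ι → ℝ}
    (hp : ∀ j, 0 ≤ p j) (ha : ∀ j, a j ≤ 1) (i : ι) :
    (1 - a i) * p i ≤ ∑ j, p j - ∑ j, a j * p j := by
  calc (1 - a i) * p i ≤ ∑ j, (1 - a j) * p j :=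
        Finset.single_le_sum (f := fun j => (1 - a j) * p j)
          (fun j _ => mul_nonneg (sub_nonneg.mpr (ha j)) (hp j)) (Finset.mem_univ i)
    _ = ∑ j, p j - ∑ j, a j * p j := by
        rw [← Finset.sum_sub_distrib]
        exact Finset.sum_congr rfl fun j _ => by ring

theorem stmt_10_general (d : ℕ) (p : Fin d → ℝ) (hp : ∀ i, 0 ≤ p i)
    (V : ℝ) (hV : V = ((∑ i, p i) - 1)⁻¹) (n : Fin d → ℝ) (hn : n = V • p)
    (a : Fin d → ℝ) (hap : 1 ≤ ∑ i, a i * p i) (ha : ∀ i, a i ≤ 1) :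
    ∀ i, a i < 1 → n i ≤ 1 / (1 - a i) := by
  intro i hi
  have hfacet : (1 - a i) * p i ≤ (∑ j, p j) - 1 :=
    (one_sub_mul_le_sum_sub_sum_mul hp ha i).trans (by linarith)
  have hbound : n i * (1 - a i) ≤ 1 := by
    calc n i * (1 - a i) = (1 - a i) * p i * ((∑ j, p j) - 1)⁻¹ := by
          rw [hn, hV, Pi.smul_apply, smul_eq_mul]; ring
      _ ≤ 1 := mul_inv_le_one_of_le₀ hfacet ((mul_nonneg (by linarith) (hp i)).trans hfacet)
  rwa [le_div_iff₀ (sub_pos.mpr hi)]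

/-- Per-coordinate weight bound: if a·p ≥ 1 and a_i ≤ 1 for all i, then
for any i with a_i < 1 one has n_i ≤ 1/(1 - a_i), where n = V • p, V = 1/(∑ p_i - 1). -/
theorem stmt_10 (d : ℕ) (p : Fin d → ℝ) (hp : ∀ i, 0 ≤ p i) (hS : 1 < ∑ i, p i)
    (V : ℝ) (hV : V = ((∑ i, p i) - 1)⁻¹) (n : Fin d → ℝ) (hn : n = V • p)
    (a : Fin d → ℝ) (hap : 1 ≤ ∑ i, a i * p i) (ha : ∀ i, a i ≤ 1) :
    ∀ i, a i < 1 → n i ≤ 1 / (1 - a i) :=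
  stmt_10_general d p hp V hV n hn a hap ha
end

section
/- For every V ∈ N coprime to 30, the simplex Conv{e_1, e_2, e_3, e_4, (V−30, 6, 10, 15)} in R^4 is empty with respect to Z^4 provided V ≥ 31; more precisely, the only points of Z^4 in this simplex are its five vertices. -/
/-!
A point of the simplex is `t • n + (1 - t) • y` with `y` in the standard simplex, so for a
lattice point `z` the coordinate sum forces `k := t * V = ∑ z - 1` to be an integer in `[0, V]`,
with `V * z i ≥ k * n i`. The cases `k = 0` and `k = V` give the vertices. For `0 < k < V`,
rounding each `k * n i` up to a multiple of `V` costs the residue `r i = (-(k * n i)) % V`, and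
`r 0 = (30 * k) % V =: s`. Coprimality makes `5 r₁ + s`, `3 r₂ + s`, `2 r₃ + s` positive multiples
of `V`, so `30 ∑ r ≥ 31 V - s > 30 V`, which contradicts `∑ z = k + 1`.
-/

open Set

theorem range_single_eq_range_ite {ι R : Type*} [DecidableEq ι] [Zero R] [One R] :
    range (fun i => (Pi.single i 1 : ι → R)) =
      range fun i j : ι => if i = j then (1 : R) else 0 := by
  congr! 2 with i
  ext j
  simp [Pi.single_apply, eq_comm]

theorem exists_of_mem_convexHull_insert_range_single {ι : Type*} [Fintype ι] [DecidableEq ι]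
    [Nonempty ι] {n x : ι → ℝ}
    (hx : x ∈ convexHull ℝ (insert n (range fun i => (Pi.single i 1 : ι → ℝ)))) :
    ∃ t ∈ Icc (0 : ℝ) 1, (∀ i, t * n i ≤ x i) ∧ ∑ i, x i = 1 + t * (∑ i, n i - 1) := by
  rw [convexHull_insert (range_nonempty _), convexJoin_singleton_left, range_single_eq_range_ite,
    convexHull_basis_eq_stdSimplex] at hx
  obtain ⟨_, ⟨y, rfl⟩, _, ⟨⟨hy0, hy1⟩, rfl⟩, t, s, ht, hs, hts, rfl⟩ := hx
  refine ⟨t, ⟨ht, by linarith⟩, fun i => ?_, ?_⟩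
  · simpa using mul_nonneg hs (hy0 i)
  · simp only [Pi.add_apply, Pi.smul_apply, smul_eq_mul, Finset.sum_add_distrib,
      ← Finset.mul_sum, hy1]
    linear_combination hts

theorem exists_of_intCast_mem_convexHull_insert_range_single {ι : Type*} [Fintype ι]
    [DecidableEq ι] [Nonempty ι] {V : ℤ} {n z : ι → ℤ} (hV : 0 < V) (hn : ∑ i, n i = V + 1)
    (hz : (fun i => (z i : ℝ)) ∈
      convexHull ℝ (insert (fun i => (n i : ℝ)) (range fun i => (Pi.single i 1 : ι → ℝ)))) :
    ∃ k, 0 ≤ k ∧ k ≤ V ∧ (∀ i, k * n i ≤ V * z i) ∧ ∑ i, z i = k + 1 := by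
  obtain ⟨t, ⟨ht0, ht1⟩, hle, hsum⟩ := exists_of_mem_convexHull_insert_range_single hz
  have hVr : (0 : ℝ) < V := by exact_mod_cast hV
  have hk : ((∑ i, z i - 1 : ℤ) : ℝ) = t * V := by
    push_cast
    rw [hsum, ← Int.cast_sum, hn]
    push_cast
    ring
  refine ⟨∑ i, z i - 1, ?_, ?_, fun i => ?_, by ring⟩ <;> rw [← Int.cast_le (R := ℝ)]
  · rw [hk, Int.cast_zero]; positivity
  · rw [hk]; nlinarith
  · push_cast at hk ⊢
    rw [hk]
    nlinarith [hle i]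

theorem exists_eq_single_of_nonneg_of_sum_eq_one {ι : Type*} [Fintype ι] [DecidableEq ι]
    {z : ι → ℤ} (h0 : ∀ i, 0 ≤ z i) (h1 : ∑ i, z i = 1) : ∃ i, z = Pi.single i 1 := by
  obtain ⟨i, -, hi⟩ := Finset.exists_ne_zero_of_sum_ne_zero (h1.trans_ne one_ne_zero)
  have hsplit := Finset.add_sum_erase Finset.univ z (Finset.mem_univ i)
  have hrest_nonneg := Finset.sum_nonneg fun j (_ : j ∈ Finset.univ.erase i) => h0 j
  have hi1 : z i = 1 := by have := (h0 i).lt_of_ne' hi; omega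
  have hrest : ∀ j ∈ Finset.univ.erase i, z j = 0 :=
    (Finset.sum_eq_zero_iff_of_nonneg fun j _ => h0 j).mp (by omega)
  refine ⟨i, funext fun j => ?_⟩
  rcases eq_or_ne j i with rfl | hj
  · simpa using hi1
  · simpa [hj] using hrest j (Finset.mem_erase.mpr ⟨hj, Finset.mem_univ j⟩)

theorem eq_of_le_of_sum_eq {ι : Type*} [Fintype ι] {n z : ι → ℤ} (hle : ∀ i, n i ≤ z i)
    (hsum : ∑ i, z i = ∑ i, n i) : z = n :=
  funext fun i => ((Finset.sum_eq_sum_iff_of_le fun i _ => hle i).mp hsum.symm i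
    (Finset.mem_univ i)).symm

-- `a + (-a) % V` is the least multiple of `V` that is `≥ a`.
theorem add_neg_emod_le_of_le_mul {V a x : ℤ} (hV : 0 < V) (h : a ≤ V * x) :
    a + (-a) % V ≤ V * x := by
  have hceil : a + (-a) % V = V * -((-a) / V) := by linarith [Int.emod_def (-a) V]
  have : -x ≤ (-a) / V := Int.le_ediv_of_mul_le hV (by linarith)
  rw [hceil]; nlinarith

theorem le_mul_neg_emod_add_emod {V a b c k : ℤ} (hV : 0 < V) (hb : 0 < b) (habc : a * b = c)
    (ha : IsCoprime V a) (hk : ¬ V ∣ k) :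
    V ≤ b * (-(k * a) % V) + (k * c) % V := by
  subst habc
  have hdvd : V ∣ b * (-(k * a) % V) + (k * (a * b)) % V := by
    have h := ((Int.mod_modEq (-(k * a)) V).mul_left b).add (Int.mod_modEq (k * (a * b)) V)
    rw [show b * -(k * a) + k * (a * b) = 0 by ring] at h
    exact Int.modEq_zero_iff_dvd.mp h
  have hpos : 0 < -(k * a) % V := by
    refine (Int.emod_pos_of_not_dvd fun h => hk ?_).resolve_left hV.ne'
    exact ha.dvd_of_dvd_mul_right (dvd_neg.mp h)
  exact Int.le_of_dvd (by nlinarith [Int.emod_nonneg (k * (a * b)) hV.ne']) hdvd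

theorem add_one_lt_sum_of_mul_le_mul {V k : ℤ} (hV : IsCoprime V 30) (hk : 0 < k) (hkV : k < V)
    {z : Fin 4 → ℤ} (hz : ∀ i, k * ![V - 30, 6, 10, 15] i ≤ V * z i) :
    k + 1 < ∑ i, z i := by
  have hV0 : 0 < V := hk.trans hkV
  have hVk : ¬ V ∣ k := fun h => (Int.le_of_dvd hk h).not_gt hkV
  have h0 : -(k * (V - 30)) % V = (k * 30) % V := by
    rw [show -(k * (V - 30)) = k * 30 + V * -k by ring, Int.add_mul_emod_self_left]
  have hc0 := add_neg_emod_le_of_le_mul hV0 (hz 0)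
  have hc1 := add_neg_emod_le_of_le_mul hV0 (hz 1)
  have hc2 := add_neg_emod_le_of_le_mul hV0 (hz 2)
  have hc3 := add_neg_emod_le_of_le_mul hV0 (hz 3)
  simp only [Fin.isValue, Matrix.cons_val, h0] at hc0 hc1 hc2 hc3
  have h1 := le_mul_neg_emod_add_emod hV0 (by norm_num : (0 : ℤ) < 5)
    (by norm_num : (6 : ℤ) * 5 = 30) (hV.of_isCoprime_of_dvd_right (by norm_num)) hVk
  have h2 := le_mul_neg_emod_add_emod hV0 (by norm_num : (0 : ℤ) < 3)
    (by norm_num : (10 : ℤ) * 3 = 30) (hV.of_isCoprime_of_dvd_right (by norm_num)) hVk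
  have h3 := le_mul_neg_emod_add_emod hV0 (by norm_num : (0 : ℤ) < 2)
    (by norm_num : (15 : ℤ) * 2 = 30) (hV.of_isCoprime_of_dvd_right (by norm_num)) hVk
  have hs := Int.emod_lt_of_pos (k * 30) hV0
  rw [Fin.sum_univ_four]
  nlinarith

theorem stmt_16_general (V : ℕ) (hcop : Nat.Coprime V 30) :
    ∀ z : Fin 4 → ℤ,
      (fun i => (z i : ℝ)) ∈ convexHull ℝ
        (insert (![(V : ℝ) - 30, 6, 10, 15] : Fin 4 → ℝ)
          (Set.range fun i => (Pi.single i 1 : Fin 4 → ℝ))) →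
      (fun i => (z i : ℝ)) ∈
        insert (![(V : ℝ) - 30, 6, 10, 15] : Fin 4 → ℝ)
          (Set.range fun i => (Pi.single i 1 : Fin 4 → ℝ)) := by
  intro z hz
  have hV : IsCoprime (V : ℤ) 30 := by exact_mod_cast hcop.isCoprime
  have hV0 : (0 : ℤ) < V := by
    rcases Nat.eq_zero_or_pos V with rfl | h
    · norm_num at hcop
    · exact_mod_cast h
  set n : Fin 4 → ℤ := ![(V : ℤ) - 30, 6, 10, 15]
  have hn : ![(V : ℝ) - 30, 6, 10, 15] = fun i => (n i : ℝ) := by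
    funext i; fin_cases i <;> simp [n]
  rw [hn] at hz ⊢
  have hn_sum : ∑ i, n i = V + 1 := by simp [n, Fin.sum_univ_four]; ring
  obtain ⟨k, hk0, hkV, hle, hsum⟩ :=
    exists_of_intCast_mem_convexHull_insert_range_single hV0 hn_sum hz
  rcases hk0.eq_or_lt with rfl | hk0
  · obtain ⟨i, rfl⟩ := exists_eq_single_of_nonneg_of_sum_eq_one
      (fun i => nonneg_of_mul_nonneg_right (by simpa using hle i) hV0) (by simpa using hsum)
    refine Or.inr ⟨i, funext fun j => ?_⟩
    by_cases hj : j = i <;> simp [hj]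
  rcases hkV.eq_or_lt with rfl | hkV
  · obtain rfl := eq_of_le_of_sum_eq (fun i => le_of_mul_le_mul_left (hle i) hV0)
      (hsum.trans hn_sum.symm)
    exact Or.inl rfl
  · exact absurd hsum (add_one_lt_sum_of_mul_le_mul hV hk0 hkV hle).ne'

/-- For V coprime to 30 with V ≥ 31, the simplex
Conv{e_1, e_2, e_3, e_4, (V−30, 6, 10, 15)} ⊂ ℝ⁴ is empty with respect to ℤ⁴:
its only lattice points are its five vertices. -/
theorem stmt_16 (V : ℕ) (hcop : Nat.Coprime V 30) (hV : 31 ≤ V) :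
    ∀ z : Fin 4 → ℤ,
      (fun i => (z i : ℝ)) ∈ convexHull ℝ
        (insert (![(V : ℝ) - 30, 6, 10, 15] : Fin 4 → ℝ)
          (Set.range fun i => (Pi.single i 1 : Fin 4 → ℝ))) →
      (fun i => (z i : ℝ)) ∈
        insert (![(V : ℝ) - 30, 6, 10, 15] : Fin 4 → ℝ)
          (Set.range fun i => (Pi.single i 1 : Fin 4 → ℝ)) :=
  stmt_16_general V hcop
end
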